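/- Let G be a bull-free, gem-free graph with no homogeneous set, and let (A,B) be a tame homogeneous pair of G with associated sets C, D, E, F. If A is not a stable set, then C is anti-complete to F and complete to E. -/

import Mathlib

/-! Since `A` contains an edge and `G` has no homogeneous set, the component of that edge in
`G[A]` is not homogeneous, so some vertex `b` outside `A` is adjacent to `x` but not to `y` for an
edge `xy` of `A`; as `C, D, E, F` each see `A` uniformly, `b ∈ B`. An edge `cf` with `c ∈ C`,
`f ∈ F` then gives the bull on the triangle `y x c` with pendants `b` at `x` and `f` at `c`, and a
non-edge `ce` with `e ∈ E` gives the gem on the path `c y e b` with centre `x`. -/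

/-- The bull: a triangle `{0,1,2}` with pendant vertices `3` (attached to `1`)
and `4` (attached to `2`). -/
def bull : SimpleGraph (Fin 5) :=
  SimpleGraph.fromRel (fun a b =>
    (a = 0 ∧ b = 1) ∨ (a = 0 ∧ b = 2) ∨ (a = 1 ∧ b = 2) ∨ (a = 1 ∧ b = 3) ∨ (a = 2 ∧ b = 4))

/-- The gem: the path `0 – 1 – 2 – 3` plus a vertex `4` adjacent to all of it. -/
def gem : SimpleGraph (Fin 5) :=
  SimpleGraph.fromRel (fun a b =>
    (a = 0 ∧ b = 1) ∨ (a = 1 ∧ b = 2) ∨ (a = 2 ∧ b = 3) ∨ a = 4)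

/-- A homogeneous set. -/
def IsHomogeneousSet {V : Type*} (G : SimpleGraph V) (X : Set V) : Prop :=
  X.Nontrivial ∧ X ≠ Set.univ ∧
    ∀ v ∉ X, (∀ x ∈ X, G.Adj v x) ∨ (∀ x ∈ X, ¬ G.Adj v x)

instance : DecidableRel bull.Adj := by unfold bull; infer_instance

instance : DecidableRel gem.Adj := by unfold gem; infer_instance

namespace SimpleGraph

variable {W V : Type*} {G : SimpleGraph V}

theorem nonempty_embedding_of_adj_iff {H : SimpleGraph W}
    (hH : ∀ i j, (∀ k, H.Adj i k ↔ H.Adj j k) → i = j) (f : W → V)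
    (hf : ∀ i j, G.Adj (f i) (f j) ↔ H.Adj i j) : Nonempty (H ↪g G) :=
  ⟨⟨⟨f, fun i j hij => hH i j fun k => by rw [← hf, ← hf, hij]⟩, hf _ _⟩⟩

theorem adj_of_reachable_induce {A : Set V} {v : V}
    (hv : ∀ x ∈ A, ∀ y ∈ A, G.Adj x y → G.Adj v x → G.Adj v y) {x y : A}
    (hxy : (G.induce A).Reachable x y) (hvx : G.Adj v x) : G.Adj v y := by
  obtain ⟨p⟩ := hxy
  induction p with
  | nil => exact hvx
  | cons h _ ih => exact ih (hv _ (Subtype.mem _) _ (Subtype.mem _) h hvx)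

theorem exists_adj_not_adj_of_not_exists_isHomogeneousSet
    (hhom : ¬∃ X, IsHomogeneousSet G X) {A : Set V} (hA : A ≠ Set.univ) {a₁ a₂ : V}
    (h₁ : a₁ ∈ A) (h₂ : a₂ ∈ A) (h : G.Adj a₁ a₂) :
    ∃ v ∉ A, ∃ x ∈ A, ∃ y ∈ A, G.Adj x y ∧ G.Adj v x ∧ ¬G.Adj v y := by
  by_contra! hA_unmixed
  set K : Set V := {x | ∃ hx : x ∈ A, (G.induce A).Reachable ⟨a₁, h₁⟩ ⟨x, hx⟩}
  have hKA : K ⊆ A := fun x hx => hx.1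
  have h₂K : a₂ ∈ K := ⟨h₂, Adj.reachable (by simpa using h)⟩
  refine hhom ⟨K, ⟨a₁, ⟨h₁, .rfl⟩, a₂, h₂K, h.ne⟩,
    fun hK => hA (Set.eq_univ_of_univ_subset (hK ▸ hKA)), fun v hvK => ?_⟩
  by_cases hvA : v ∈ A
  · refine Or.inr fun x ⟨hxA, hx⟩ hvx => hvK ⟨hvA, hx.trans (Adj.reachable ?_)⟩
    simpa using hvx.symm
  by_cases hex : ∃ x ∈ K, G.Adj v x
  · obtain ⟨x, ⟨hxA, hx⟩, hvx⟩ := hex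
    exact Or.inl fun y ⟨hyA, hy⟩ =>
      adj_of_reachable_induce (hA_unmixed v hvA) (hx.symm.trans hy) hvx
  · exact Or.inr fun x hx hvx => hex ⟨x, hx, hvx⟩

end SimpleGraph

theorem nonempty_bull_embedding {V : Type*} {G : SimpleGraph V} {v₀ v₁ v₂ v₃ v₄ : V}
    (h01 : G.Adj v₀ v₁) (h02 : G.Adj v₀ v₂) (h12 : G.Adj v₁ v₂)
    (h13 : G.Adj v₁ v₃) (h24 : G.Adj v₂ v₄)
    (n03 : ¬G.Adj v₀ v₃) (n04 : ¬G.Adj v₀ v₄) (n14 : ¬G.Adj v₁ v₄)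
    (n23 : ¬G.Adj v₂ v₃) (n34 : ¬G.Adj v₃ v₄) :
    Nonempty (bull ↪g G) := by
  refine SimpleGraph.nonempty_embedding_of_adj_iff (by decide) ![v₀, v₁, v₂, v₃, v₄] ?_
  intro i j
  fin_cases i <;> fin_cases j <;> simp [bull, G.adj_comm, *]

theorem nonempty_gem_embedding {V : Type*} {G : SimpleGraph V} {v₀ v₁ v₂ v₃ v₄ : V}
    (h01 : G.Adj v₀ v₁) (h12 : G.Adj v₁ v₂) (h23 : G.Adj v₂ v₃)
    (h04 : G.Adj v₀ v₄) (h14 : G.Adj v₁ v₄) (h24 : G.Adj v₂ v₄) (h34 : G.Adj v₃ v₄)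
    (n02 : ¬G.Adj v₀ v₂) (n03 : ¬G.Adj v₀ v₃) (n13 : ¬G.Adj v₁ v₃) :
    Nonempty (gem ↪g G) := by
  refine SimpleGraph.nonempty_embedding_of_adj_iff (by decide) ![v₀, v₁, v₂, v₃, v₄] ?_
  intro i j
  fin_cases i <;> fin_cases j <;> simp [gem, G.adj_comm, *]

theorem hom_pair_A_not_stable_general {V : Type*} (G : SimpleGraph V)
    (hbull : ¬ Nonempty (bull ↪g G)) (hgem : ¬ Nonempty (gem ↪g G))
    (hhom : ¬ ∃ X : Set V, IsHomogeneousSet G X)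
    (A B C D E F : Set V)
    (hBne : B.Nonempty)
    (hpw : List.Pairwise Disjoint [A, B, C, D, E, F])
    (hunion : A ∪ B ∪ C ∪ D ∪ E ∪ F = Set.univ)
    (hC : ∀ c ∈ C, (∀ a ∈ A, G.Adj c a) ∧ (∀ b ∈ B, ¬ G.Adj c b))
    (hD : ∀ d ∈ D, (∀ b ∈ B, G.Adj d b) ∧ (∀ a ∈ A, ¬ G.Adj d a))
    (hE : ∀ e ∈ E, (∀ a ∈ A, G.Adj e a) ∧ (∀ b ∈ B, G.Adj e b))
    (hF : ∀ f ∈ F, (∀ a ∈ A, ¬ G.Adj f a) ∧ (∀ b ∈ B, ¬ G.Adj f b))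
    (hAnotstable : ∃ a1 ∈ A, ∃ a2 ∈ A, G.Adj a1 a2) :
    (∀ c ∈ C, ∀ f ∈ F, ¬ G.Adj c f) ∧ (∀ c ∈ C, ∀ e ∈ E, G.Adj c e) := by
  obtain ⟨a₁, ha₁, a₂, ha₂, ha⟩ := hAnotstable
  have hA : A ≠ Set.univ := by
    obtain ⟨b, hb⟩ := hBne
    have hAB : Disjoint A B := (List.pairwise_cons.mp hpw).1 B (by simp)
    exact fun h => hAB.notMem_of_mem_right hb (h ▸ Set.mem_univ b)
  obtain ⟨b, hbA, x, hx, y, hy, hxy, hbx, hby⟩ :=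
    SimpleGraph.exists_adj_not_adj_of_not_exists_isHomogeneousSet hhom hA ha₁ ha₂ ha
  have hb : b ∈ B := by
    rcases hunion.symm ▸ Set.mem_univ b with ((((hb | hb) | hb) | hb) | hb) | hb
    exacts [absurd hb hbA, hb, absurd ((hC b hb).1 y hy) hby, absurd hbx ((hD b hb).2 x hx),
      absurd ((hE b hb).1 y hy) hby, absurd hbx ((hF b hb).1 x hx)]
  refine ⟨fun c hc f hf hcf => hbull ?_, fun c hc e he => by_contra fun hce => hgem ?_⟩
  · exact nonempty_bull_embedding hxy.symm ((hC c hc).1 y hy).symm ((hC c hc).1 x hx).symm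
      hbx.symm hcf (fun h => hby h.symm) (fun h => (hF f hf).1 y hy h.symm)
      (fun h => (hF f hf).1 x hx h.symm) ((hC c hc).2 b hb) (fun h => (hF f hf).2 b hb h.symm)
  · exact nonempty_gem_embedding ((hC c hc).1 y hy) ((hE e he).1 y hy).symm ((hE e he).2 b hb)
      ((hC c hc).1 x hx) hxy.symm ((hE e he).1 x hx) hbx hce ((hC c hc).2 b hb)
      (fun h => hby h.symm)

/-- Lemma on tame homogeneous pairs in bull-free gem-free graphs without homogeneous
sets: if `A` is not stable, then `C` is anti-complete to `F` and complete to `E`. -/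
theorem hom_pair_A_not_stable {V : Type*} [Fintype V] (G : SimpleGraph V)
    (hbull : ¬ Nonempty (bull ↪g G)) (hgem : ¬ Nonempty (gem ↪g G))
    (hhom : ¬ ∃ X : Set V, IsHomogeneousSet G X)
    (A B C D E F : Set V)
    (hAne : A.Nonempty) (hBne : B.Nonempty)
    (hpw : List.Pairwise Disjoint [A, B, C, D, E, F])
    (hunion : A ∪ B ∪ C ∪ D ∪ E ∪ F = Set.univ)
    (hC : ∀ c ∈ C, (∀ a ∈ A, G.Adj c a) ∧ (∀ b ∈ B, ¬ G.Adj c b))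
    (hD : ∀ d ∈ D, (∀ b ∈ B, G.Adj d b) ∧ (∀ a ∈ A, ¬ G.Adj d a))
    (hE : ∀ e ∈ E, (∀ a ∈ A, G.Adj e a) ∧ (∀ b ∈ B, G.Adj e b))
    (hF : ∀ f ∈ F, (∀ a ∈ A, ¬ G.Adj f a) ∧ (∀ b ∈ B, ¬ G.Adj f b))
    (htame1 : 2 < A.ncard + B.ncard)
    (htame2 : A.ncard + B.ncard + 2 < Fintype.card V)
    (hmix1 : ∃ a ∈ A, ∃ b ∈ B, G.Adj a b)
    (hmix2 : ∃ a ∈ A, ∃ b ∈ B, ¬ G.Adj a b)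
    (hAnotstable : ∃ a1 ∈ A, ∃ a2 ∈ A, G.Adj a1 a2) :
    (∀ c ∈ C, ∀ f ∈ F, ¬ G.Adj c f) ∧ (∀ c ∈ C, ∀ e ∈ E, G.Adj c e) :=
  hom_pair_A_not_stable_general G hbull hgem hhom A B C D E F hBne hpw hunion hC hD hE hF
    hAnotstable
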